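/- arXiv:1201.0383 — 7 statements merged into one kernel-verified Lean document; each statement's English description precedes it below -/
import Mathlib

section
/- If m_0, m_1, ..., m_{n-2} are nonnegative integers such that the sum over i from 0 to n-2 of C(n-i+1, 2) * m_i is at most C(n+1, 2), then the sum over i from 0 to n-2 of C(n-i, 2) * m_i is at most C(n, 2). -/
/-!
Since `C(k, 2) / C(k + 1, 2) = (k - 1) / (k + 1)` increases with `k`, every ratio
`C(n - i, 2) / C(n - i + 1, 2)` is at most `C(n, 2) / C(n + 1, 2)`; so shrinking each weight
`C(n - i + 1, 2)` to `C(n - i, 2)` shrinks the weighted sum at least by the factor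
`C(n, 2) / C(n + 1, 2)`.
-/

open Finset

theorem Finset.sum_le_of_mul_le_mul {ι R : Type*} [CommSemiring R] [LinearOrder R]
    [IsStrictOrderedRing R] {s : Finset ι} {f g : ι → R} {A B : R} (hB : 0 < B) (hA : 0 ≤ A)
    (hfg : ∀ i ∈ s, f i * B ≤ g i * A) (hg : ∑ i ∈ s, g i ≤ B) :
    ∑ i ∈ s, f i ≤ A := by
  refine le_of_mul_le_mul_right ?_ hB
  calc (∑ i ∈ s, f i) * B ≤ (∑ i ∈ s, g i) * A := by
        simpa only [sum_mul] using sum_le_sum hfg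
    _ ≤ B * A := mul_le_mul_of_nonneg_right hg hA
    _ = A * B := mul_comm B A

theorem Nat.choose_two_mul_le_mul_choose_two {k n : ℕ} (h : k ≤ n) :
    k.choose 2 * n ≤ k * n.choose 2 := by
  have hkn : (k : ℚ) ≤ n := by exact_mod_cast h
  have : (k.choose 2 * n : ℚ) ≤ k * n.choose 2 := by
    rw [Nat.cast_choose_two, Nat.cast_choose_two]
    nlinarith [mul_nonneg (mul_nonneg k.cast_nonneg n.cast_nonneg) (sub_nonneg.2 hkn)]
  exact_mod_cast this

theorem Nat.choose_two_mul_choose_two_succ_le {k n : ℕ} (h : k ≤ n) :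
    k.choose 2 * (n + 1).choose 2 ≤ (k + 1).choose 2 * n.choose 2 := by
  rw [Nat.choose_succ_succ' n, Nat.choose_succ_succ' k, Nat.choose_one_right,
    Nat.choose_one_right]
  nlinarith [Nat.choose_two_mul_le_mul_choose_two h]

theorem stmt_0 (n : ℕ) (hn : 2 ≤ n) (m : ℕ → ℕ)
    (h : ∑ i ∈ Finset.range (n - 1), Nat.choose (n - i + 1) 2 * m i ≤ Nat.choose (n + 1) 2) :
    ∑ i ∈ Finset.range (n - 1), Nat.choose (n - i) 2 * m i ≤ Nat.choose n 2 := by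
  refine sum_le_of_mul_le_mul (Nat.choose_pos (by omega)) (Nat.zero_le _) (fun i _ => ?_) h
  simpa only [mul_right_comm _ (m i)] using
    Nat.mul_le_mul_right (m i) (Nat.choose_two_mul_choose_two_succ_le (Nat.sub_le n i))
end

section
/- If m_0, m_1, ..., m_{n-2} are nonnegative integers such that the sum over i from 0 to n-2 of C(n-i+1, 2) * m_i is at most C(n+1, 2), and moreover the sum over i from 0 to n-2 of C(n-i, 2) * m_i equals C(n, 2), then m_0 = 1 and m_i = 0 for all i with 1 ≤ i ≤ n-2. -/
/-!
With weights `a i = n - i`, Pascal's rule `C(a+1, 2) = a + C(a, 2)` turns the two hypotheses into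
`∑ a i * m i ≤ n`. Since `a (n - 1) = 2 C(a, 2) + a (n - a)` for `a ≤ n`, multiplying that bound by
`n - 1` gives `n (n - 1) ≥ n (n - 1) + ∑ a i (n - a i) m i`, so `m i = 0` whenever `0 < a i < n`,
and the equation then reduces to `C(n, 2) * m 0 = C(n, 2)`.
-/

open Finset

theorem Nat.two_mul_choose_two (a : ℕ) : 2 * a.choose 2 = a * (a - 1) := by
  rw [Nat.choose_two_right, Nat.mul_div_cancel' (Nat.even_mul_pred_self a).two_dvd]

theorem Nat.mul_sub_one_eq_two_mul_choose_two_add {a N : ℕ} (h : a ≤ N) :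
    a * (N - 1) = 2 * a.choose 2 + a * (N - a) := by
  rw [Nat.two_mul_choose_two, ← Nat.mul_add]
  rcases a.eq_zero_or_pos with rfl | ha
  · simp
  · congr 1; omega

section WeightedChooseTwo

variable {ι : Type*} {s : Finset ι} {a m : ι → ℕ} {N : ℕ}

theorem sum_mul_le_of_sum_choose_two
    (hle : ∑ i ∈ s, (a i + 1).choose 2 * m i ≤ (N + 1).choose 2)
    (heq : ∑ i ∈ s, (a i).choose 2 * m i = N.choose 2) :
    ∑ i ∈ s, a i * m i ≤ N := by
  have hsucc (k : ℕ) : (k + 1).choose 2 = k + k.choose 2 := by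
    rw [Nat.choose_succ_succ', Nat.choose_one_right]
  simp only [hsucc, add_mul, sum_add_distrib, heq] at hle
  omega

theorem sum_mul_sub_mul_eq_zero_of_sum_choose_two
    (ha : ∀ i ∈ s, a i ≤ N) (hlin : ∑ i ∈ s, a i * m i ≤ N)
    (hquad : ∑ i ∈ s, (a i).choose 2 * m i = N.choose 2) :
    ∑ i ∈ s, a i * (N - a i) * m i = 0 := by
  have hsplit : (N - 1) * ∑ i ∈ s, a i * m i
      = 2 * ∑ i ∈ s, (a i).choose 2 * m i + ∑ i ∈ s, a i * (N - a i) * m i := by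
    simp only [mul_sum, ← sum_add_distrib]
    refine sum_congr rfl fun i hi => ?_
    rw [← mul_assoc, ← mul_assoc, ← add_mul,
      ← Nat.mul_sub_one_eq_two_mul_choose_two_add (ha i hi)]
    ring
  have hbound : (N - 1) * ∑ i ∈ s, a i * m i ≤ 2 * N.choose 2 := by
    rw [Nat.two_mul_choose_two, mul_comm N]
    exact Nat.mul_le_mul_left _ hlin
  omega

end WeightedChooseTwo

theorem stmt_1 (n : ℕ) (hn : 2 ≤ n) (m : ℕ → ℕ)
    (h : ∑ i ∈ Finset.range (n - 1), Nat.choose (n - i + 1) 2 * m i ≤ Nat.choose (n + 1) 2)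
    (heq : ∑ i ∈ Finset.range (n - 1), Nat.choose (n - i) 2 * m i = Nat.choose n 2) :
    m 0 = 1 ∧ ∀ i, 1 ≤ i → i ≤ n - 2 → m i = 0 := by
  have hzero := sum_mul_sub_mul_eq_zero_of_sum_choose_two (fun i _ => Nat.sub_le n i)
    (sum_mul_le_of_sum_choose_two h heq) heq
  have hm : ∀ i, 1 ≤ i → i ≤ n - 2 → m i = 0 := fun i h1 h2 => by
    have := sum_eq_zero_iff.mp hzero i (mem_range.mpr (by omega))
    simp only [mul_eq_zero] at this
    omega
  refine ⟨?_, hm⟩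
  rwa [sum_eq_single_of_mem 0 (mem_range.mpr (by omega))
    (fun i hi h0 => by rw [hm i (by omega) (by simp at hi; omega), mul_zero]), Nat.sub_zero,
    mul_eq_left₀ (Nat.choose_pos hn).ne'] at heq
end

section
/- The determinant of the symmetric 3×3 matrix with entries a_11 = 2+2q, a_12 = 2n(n+1)(p+q), a_13 = 2q, a_22 = 2n(n+1)(1+p+2(n^2+n-1)q), a_23 = 2n(n+1)q, a_33 = q, where p = -(n^2+2n-1)/(n^2(n+3)) and q = 1/(n(n+3)), equals -8(n+1)(n^4+6n^3+7n^2-6n+1)/(n^3(n+3)^3), which is negative for every integer n ≥ 1. -/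
/-!
Substituting `p` and `q` and clearing the denominator `n³(n+3)³` turns the determinant into a
polynomial identity. Its sign is then visible because the quartic factor is the square
`(n² + 3n - 1)²` (the number of vertices of the graph), and `n² + 3n - 1 > 0` for `n ≥ 1`.
-/

variable {K : Type*} [Field K]

def quadFormMatrix (n p q : K) : Matrix (Fin 3) (Fin 3) K :=
  !![2 + 2 * q, 2 * n * (n + 1) * (p + q), 2 * q;
    2 * n * (n + 1) * (p + q), 2 * n * (n + 1) * (1 + p + 2 * (n ^ 2 + n - 1) * q),
      2 * n * (n + 1) * q;
    2 * q, 2 * n * (n + 1) * q, q]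

theorem det_quadFormMatrix {n p q : K} (hn : n ≠ 0) (hn3 : n + 3 ≠ 0)
    (hp : p = -(n ^ 2 + 2 * n - 1) / (n ^ 2 * (n + 3))) (hq : q = 1 / (n * (n + 3))) :
    (quadFormMatrix n p q).det =
      -8 * (n + 1) * (n ^ 4 + 6 * n ^ 3 + 7 * n ^ 2 - 6 * n + 1) / (n ^ 3 * (n + 3) ^ 3) := by
  rw [quadFormMatrix, Matrix.det_fin_three]
  simp only [Matrix.of_apply, Matrix.cons_val', Matrix.cons_val_zero, Matrix.cons_val_one,
    Matrix.cons_val_two, Matrix.head_cons, Matrix.tail_cons, Matrix.empty_val',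
    Matrix.cons_val_fin_one, Matrix.head_fin_const]
  subst hp hq
  field_simp
  ring

theorem quartic_eq_sq {R : Type*} [CommRing R] (n : R) :
    n ^ 4 + 6 * n ^ 3 + 7 * n ^ 2 - 6 * n + 1 = (n ^ 2 + 3 * n - 1) ^ 2 := by
  ring

theorem det_value_neg {n : ℝ} (hn : 1 ≤ n) :
    -8 * (n + 1) * (n ^ 4 + 6 * n ^ 3 + 7 * n ^ 2 - 6 * n + 1) / (n ^ 3 * (n + 3) ^ 3) < 0 := by
  have hvertices : 0 < n ^ 2 + 3 * n - 1 := by nlinarith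
  rw [quartic_eq_sq]
  apply div_neg_of_neg_of_pos
  · have : 0 < (n + 1) * (n ^ 2 + 3 * n - 1) ^ 2 := by positivity
    linarith
  · have : 0 < n := by linarith
    positivity

theorem stmt_9 (n : ℝ) (hn : 1 ≤ n)
    (p q : ℝ) (hp : p = -(n ^ 2 + 2 * n - 1) / (n ^ 2 * (n + 3)))
    (hq : q = 1 / (n * (n + 3))) :
    Matrix.det !![2 + 2 * q, 2 * n * (n + 1) * (p + q), 2 * q;
        2 * n * (n + 1) * (p + q), 2 * n * (n + 1) * (1 + p + 2 * (n ^ 2 + n - 1) * q),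
          2 * n * (n + 1) * q;
        2 * q, 2 * n * (n + 1) * q, q] =
      -8 * (n + 1) * (n ^ 4 + 6 * n ^ 3 + 7 * n ^ 2 - 6 * n + 1) / (n ^ 3 * (n + 3) ^ 3) ∧
    -8 * (n + 1) * (n ^ 4 + 6 * n ^ 3 + 7 * n ^ 2 - 6 * n + 1) / (n ^ 3 * (n + 3) ^ 3) < 0 :=
  ⟨det_quadFormMatrix (by positivity) (by positivity) hp hq, det_value_neg hn⟩
end

section
/- Let V be a set and for each v ∈ V let σ_v : V → V be an involution with σ_v(v) = v, satisfying σ_u(v) = σ_v(u) for all u, v, σ_u σ_v σ_u = σ_{σ_u(v)} for all u, v, and (σ_v σ_w σ_u)^2 = id for all u, v, w. Fix v_0 ∈ V and define u + v = σ_{v_0}(σ_u(v)), 0 = v_0, and -v = σ_{v_0}(v). Then (V, +, 0, -) is an abelian group in which every element has order dividing 3 (i.e., v + v + v = 0 for all v). -/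
theorem stmt_13 {V : Type*} (σ : V → V → V)
    (hinv : ∀ v x, σ v (σ v x) = x)
    (hfix : ∀ v, σ v v = v)
    (hsymm : ∀ u v, σ u v = σ v u)
    (hconj : ∀ u v x, σ u (σ v (σ u x)) = σ (σ u v) x)
    (h2 : ∀ u v w x, σ v (σ w (σ u (σ v (σ w (σ u x))))) = x)
    (v0 : V) :
    (∀ u v w, σ v0 (σ u (σ v0 (σ v w))) = σ v0 (σ (σ v0 (σ u v)) w)) ∧
    (∀ u v, σ v0 (σ u v) = σ v0 (σ v u)) ∧
    (∀ v, σ v0 (σ v v0) = v) ∧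
    (∀ v, σ v0 (σ v (σ v0 v)) = v0) ∧
    (∀ v, σ v0 (σ v (σ v0 (σ v v))) = v0) := by
  have key : ∀ a b c x, σ b (σ c (σ a x)) = σ a (σ c (σ b x)) := by
    intro a b c x
    have := h2 a b c (σ a (σ c (σ b x)))
    simp only [hinv] at this
    exact this
  have neg : ∀ v, σ v0 (σ v (σ v0 v)) = v0 := by
    intro v
    rw [hsymm v0 v, hinv v, hfix]
  refine ⟨?_, ?_, ?_, neg, ?_⟩
  · intro u v w
    congr 1
    have : σ (σ v0 (σ u v)) w = σ u (σ v0 (σ v w)) := by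
      calc σ (σ v0 (σ u v)) w
          = σ v0 (σ (σ u v) (σ v0 w)) := (hconj v0 (σ u v) w).symm
        _ = σ v0 (σ u (σ v (σ u (σ v0 w)))) := by rw [hconj u v (σ v0 w)]
        _ = σ v0 (σ u (σ v0 (σ u (σ v w)))) := by rw [key v0 v u w]
        _ = σ v0 (σ (σ u v0) (σ v w)) := by rw [hconj u v0 (σ v w)]
        _ = σ v0 (σ (σ v0 u) (σ v w)) := by rw [hsymm u v0]
        _ = σ v0 (σ v0 (σ u (σ v0 (σ v w)))) := by rw [hconj v0 u (σ v w)]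
        _ = σ u (σ v0 (σ v w)) := hinv _ _
    exact this.symm
  · intro u v; rw [hsymm u v]
  · intro v; rw [hsymm v v0, hinv]
  · intro v; rw [hfix v]; exact neg v
end

section
/- Under the hypotheses of the previous construction (involutions σ_v on V with σ_v(v) = v, σ_u(v) = σ_v(u), σ_u σ_v σ_u = σ_{σ_u(v)}, and (σ_v σ_w σ_u)^2 = id; addition defined by u + v = σ_{v_0}(σ_u(v)) with zero v_0), addition is associative: u + (v + w) = (u + v) + w for all u, v, w ∈ V. -/
/-!
Both sides are words in the involutions σ_u, σ_v, σ_{v₀} once σ_{σ_x y} is expanded as the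
conjugate σ_x σ_y σ_x. The two words then differ by reversing the triple product σ_v σ_u σ_{v₀},
which is allowed because every triple product σ_c σ_a σ_b is an involution.
-/

theorem comp_three_symm {V : Type*} {σ : V → V → V} (hinv : ∀ v x, σ v (σ v x) = x)
    (h2 : ∀ u v w x, σ v (σ w (σ u (σ v (σ w (σ u x))))) = x) (a b c x : V) :
    σ a (σ b (σ c x)) = σ c (σ b (σ a x)) := by
  simpa only [hinv] using congrArg (fun y => σ c (σ b (σ a y))) (h2 c a b x)

theorem stmt_14_general {V : Type*} (σ : V → V → V)
    (hinv : ∀ v x, σ v (σ v x) = x)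
    (hsymm : ∀ u v, σ u v = σ v u)
    (hconj : ∀ u v x, σ u (σ v (σ u x)) = σ (σ u v) x)
    (h2 : ∀ u v w x, σ v (σ w (σ u (σ v (σ w (σ u x))))) = x)
    (v0 : V) :
    ∀ u v w, σ v0 (σ u (σ v0 (σ v w))) = σ v0 (σ (σ v0 (σ u v)) w) := by
  intro u v w
  calc σ v0 (σ u (σ v0 (σ v w)))
      = σ (σ u v0) (σ v w) := by rw [hsymm u v0, hconj]
    _ = σ u (σ v (σ u (σ v0 w))) := by rw [← hconj, comp_three_symm hinv h2 v u v0]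
    _ = σ v0 (σ v0 (σ (σ u v) (σ v0 w))) := by rw [hinv, hconj]
    _ = σ v0 (σ (σ v0 (σ u v)) w) := by rw [hconj]

theorem stmt_14 {V : Type*} (σ : V → V → V)
    (hinv : ∀ v x, σ v (σ v x) = x)
    (hfix : ∀ v, σ v v = v)
    (hsymm : ∀ u v, σ u v = σ v u)
    (hconj : ∀ u v x, σ u (σ v (σ u x)) = σ (σ u v) x)
    (h2 : ∀ u v w x, σ v (σ w (σ u (σ v (σ w (σ u x))))) = x)
    (v0 : V) :
    ∀ u v w, σ v0 (σ u (σ v0 (σ v w))) = σ v0 (σ (σ v0 (σ u v)) w) :=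
  stmt_14_general σ hinv hsymm hconj h2 v0
end

section
/- The only positive integer solutions (n, m) of the equation n^2 + 3n - 1 = 3^m are (1, 1), (2, 2), and (4, 3). -/
/-!
With `x = 2n + 3` the equation becomes `x² = 4·3^m + 13`. For even `m = 2t` this is
`(x - 2·3^t)(x + 2·3^t) = 13`, forcing `3^t = 3`. For odd `m = 2t + 1` it says that
`x + 2·3^t √3` has norm `13` in `ℤ[√3]`; by descent along the unit `2 + √3`, every such
element with nonnegative coordinates is `(4 + √3)(2 + √3)^k` or `(5 + 2√3)(2 + √3)^k`.
Modulo `666 = 18 · 37` these sequences have period `36`: modulo `18`, vanishing of the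
`√3`-coordinate pins down `k` modulo `18`, and modulo `37` the coordinate at the remaining
indices is never of the form `18·3^s`, which excludes `t ≥ 2`.
-/

/-- Multiplication of `x + y√3` by the unit `2 + √3`. -/
def pellStep {R : Type*} [Semiring R] (s : R × R) : R × R :=
  (2 * s.1 + 3 * s.2, s.1 + 2 * s.2)

theorem map_iterate_pellStep {R S : Type*} [Semiring R] [Semiring S] (f : R →+* S) (k : ℕ)
    (s : R × R) : Prod.map f f (pellStep^[k] s) = pellStep^[k] (Prod.map f f s) :=
  (Function.Semiconj.iterate_right (fun _ => by simp [pellStep, map_ofNat]) k) s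

theorem exists_iterate_pellStep_eq (N : ℕ) {x y : ℕ} (h : x ^ 2 = 3 * y ^ 2 + N) :
    ∃ k x₀ y₀, x₀ ^ 2 = 3 * y₀ ^ 2 + N ∧ y₀ ^ 2 ≤ N ∧ pellStep^[k] (x₀, y₀) = (x, y) := by
  induction y using Nat.strong_induction_on generalizing x with
  | _ y ih =>
  by_cases hy : y ^ 2 ≤ N
  · exact ⟨0, x, y, h, hy, rfl⟩
  -- `(2x - 3y, 2y - x)` is `(x + y√3)(2 - √3)`, a solution in `ℕ²` with smaller `y` once `y² > N`.
  have h3y : 3 * y ≤ 2 * x := by nlinarith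
  have hx2y : x < 2 * y := by nlinarith
  have hyx : y < x := by nlinarith
  have hpred : (2 * x - 3 * y) ^ 2 = 3 * (2 * y - x) ^ 2 + N := by
    zify [h3y, hx2y.le] at h ⊢
    linear_combination h
  obtain ⟨k, x₀, y₀, h₀, hy₀, hk⟩ := ih (2 * y - x) (by omega) hpred
  refine ⟨k + 1, x₀, y₀, h₀, hy₀, ?_⟩
  rw [Function.iterate_succ_apply', hk, pellStep, Prod.mk.injEq]
  omega

theorem exists_iterate_pellStep_eq_of_sq_eq_three_mul_sq_add_thirteen {x y : ℕ}
    (h : x ^ 2 = 3 * y ^ 2 + 13) :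
    ∃ k, pellStep^[k] (4, 1) = (x, y) ∨ pellStep^[k] (5, 2) = (x, y) := by
  obtain ⟨k, x₀, y₀, h₀, hy₀, hk⟩ := exists_iterate_pellStep_eq 13 h
  have hy₀ : y₀ ≤ 3 := by nlinarith
  have hx₀ : x₀ ≤ 7 := by nlinarith
  have hseed : (x₀, y₀) = (4, 1) ∨ (x₀, y₀) = (5, 2) := by
    interval_cases y₀ <;> interval_cases x₀ <;> norm_num at h₀ <;> simp
  rcases hseed with hseed | hseed <;> rw [hseed] at hk
  exacts [⟨k, .inl hk⟩, ⟨k, .inr hk⟩]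

theorem iterate_pellStep_zmod_snd_ne (k s : ℕ) :
    (pellStep^[k] ((4, 1) : ZMod 666 × ZMod 666)).2 ≠ 3 ^ s * 18 ∧
      (pellStep^[k] ((5, 2) : ZMod 666 × ZMod 666)).2 ≠ 3 ^ s * 18 := by
  have hA : Function.IsPeriodicPt pellStep 36 ((4, 1) : ZMod 666 × ZMod 666) := by
    unfold Function.IsPeriodicPt Function.IsFixedPt; decide
  have hB : Function.IsPeriodicPt pellStep 36 ((5, 2) : ZMod 666 × ZMod 666) := by
    unfold Function.IsPeriodicPt Function.IsFixedPt; decide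
  have h3 : Function.IsPeriodicPt ((3 : ZMod 666) * ·) 18 18 := by
    unfold Function.IsPeriodicPt Function.IsFixedPt; decide
  have hcheck : ∀ k < 36, ∀ s < 18,
      (pellStep^[k] ((4, 1) : ZMod 666 × ZMod 666)).2 ≠ 3 ^ s * 18 ∧
        (pellStep^[k] ((5, 2) : ZMod 666 × ZMod 666)).2 ≠ 3 ^ s * 18 := by
    decide
  have hs := h3.iterate_mod_apply s
  rw [mul_left_iterate_apply, mul_left_iterate_apply] at hs
  rw [← hA.iterate_mod_apply, ← hB.iterate_mod_apply, ← hs]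
  exact hcheck _ (Nat.mod_lt _ (by norm_num)) _ (Nat.mod_lt _ (by norm_num))

theorem iterate_pellStep_snd_ne (k s : ℕ) :
    (pellStep^[k] (4, 1)).2 ≠ 3 ^ s * 18 ∧ (pellStep^[k] (5, 2)).2 ≠ 3 ^ s * 18 := by
  have hcast (seed : ℕ × ℕ) (h : (pellStep^[k] seed).2 = 3 ^ s * 18) :
      (pellStep^[k] (Prod.map (↑) (↑) seed : ZMod 666 × ZMod 666)).2 = 3 ^ s * 18 := by
    rw [← Nat.coe_castRingHom, ← map_iterate_pellStep]
    simp [h]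
  exact ⟨fun h => (iterate_pellStep_zmod_snd_ne k s).1 (by simpa using hcast _ h),
    fun h => (iterate_pellStep_zmod_snd_ne k s).2 (by simpa using hcast _ h)⟩

theorem le_one_of_sq_eq_three_mul_sq_add_thirteen {x t : ℕ}
    (h : x ^ 2 = 3 * (2 * 3 ^ t) ^ 2 + 13) : t ≤ 1 := by
  by_contra! ht
  obtain ⟨s, rfl⟩ : ∃ s, t = s + 2 := ⟨t - 2, by omega⟩
  rw [show 2 * 3 ^ (s + 2) = 3 ^ s * 18 by ring] at h
  obtain ⟨k, hk | hk⟩ := exists_iterate_pellStep_eq_of_sq_eq_three_mul_sq_add_thirteen h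
  · exact (iterate_pellStep_snd_ne k s).1 (by rw [hk])
  · exact (iterate_pellStep_snd_ne k s).2 (by rw [hk])

theorem eq_seven_of_sq_eq_sq_add_thirteen {x y : ℕ} (h : x ^ 2 = y ^ 2 + 13) :
    x = 7 ∧ y = 6 := by
  have hfac : (x + y) * (x - y) = 13 := by rw [← Nat.sq_sub_sq]; omega
  rcases (Nat.dvd_prime (by norm_num)).1 (Dvd.intro _ hfac) with h1 | h13
  · rw [h1] at hfac; omega
  · rw [h13] at hfac; omega

theorem stmt_15_general (n m : ℕ) :
    n ^ 2 + 3 * n - 1 = 3 ^ m ↔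
      (n = 1 ∧ m = 1) ∨ (n = 2 ∧ m = 2) ∨ (n = 4 ∧ m = 3) := by
  refine ⟨fun h => ?_, ?_⟩
  · have hsq : (2 * n + 3) ^ 2 = 4 * 3 ^ m + 13 := by
      have := Nat.one_le_pow m 3 (by norm_num)
      have h' : n ^ 2 + 3 * n = 3 ^ m + 1 := by omega
      linear_combination 4 * h'
    obtain ⟨t, rfl | rfl⟩ := Nat.even_or_odd' m
    · obtain ⟨hx, hy⟩ := eq_seven_of_sq_eq_sq_add_thirteen (y := 2 * 3 ^ t) (by rw [hsq]; ring)
      have ht : t = 1 :=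
        Nat.pow_right_injective (by norm_num : 2 ≤ 3) (show 3 ^ t = 3 ^ 1 by omega)
      omega
    · have ht := le_one_of_sq_eq_three_mul_sq_add_thirteen (t := t) (by rw [hsq]; ring)
      interval_cases t <;> norm_num at hsq
      · have := Nat.pow_left_injective two_ne_zero (hsq.trans (by norm_num : 25 = 5 ^ 2))
        omega
      · have := Nat.pow_left_injective two_ne_zero (hsq.trans (by norm_num : 121 = 11 ^ 2))
        omega
  · rintro (⟨rfl, rfl⟩ | ⟨rfl, rfl⟩ | ⟨rfl, rfl⟩) <;> norm_num

theorem stmt_15 (n m : ℕ) (hn : 0 < n) (hm : 0 < m) :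
    n ^ 2 + 3 * n - 1 = 3 ^ m ↔
      (n = 1 ∧ m = 1) ∨ (n = 2 ∧ m = 2) ∨ (n = 4 ∧ m = 3) :=
  stmt_15_general n m
end

section
/- The only odd positive integers u with u ≥ 5 such that u^2 - 13 = 4·3^m for some positive integer m are u = 5 (m = 1), u = 7 (m = 2), and u = 11 (m = 3). -/
/-!
For even `m = 2j` the equation is `u² = w² + 13` with `w = 2·3^j < u`, so `2w + 1 ≤ 13`.
For odd `m = 2j + 1` it is `u² = 3y² + 13` with `y = 2·3^j`. Descent along the unit `2 + √3`
shows that every natural solution of `x² - 3y² = 13` lies in the orbit of `(4, 1)` or `(5, 2)`.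
Modulo `765 = 9·5·17` both orbits have period 18 and `18·3^t` has period 16 in `t`; a finite
check shows that they never meet, so `j ≤ 1`.
-/

namespace PellThirteen

/-- Multiplication of `x + y√3` by the unit `2 + √3`. -/
def pellStep {R : Type*} [Semiring R] (p : R × R) : R × R :=
  (2 * p.1 + 3 * p.2, p.1 + 2 * p.2)

theorem semiconj_map_pellStep {R S : Type*} [Semiring R] [Semiring S] (f : R →+* S) :
    Function.Semiconj (Prod.map f f) pellStep pellStep := fun p => by
  simp [pellStep, map_ofNat]

theorem exists_pellStep_eq {x y : ℕ} (hxy : x ^ 2 = 3 * y ^ 2 + 13) (hy : 4 ≤ y) :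
    ∃ a b, a ^ 2 = 3 * b ^ 2 + 13 ∧ b < y ∧ pellStep (a, b) = (x, y) := by
  have h3y : 3 * y < 2 * x := by nlinarith
  have h2y : x < 2 * y := by nlinarith
  refine ⟨2 * x - 3 * y, 2 * y - x, ?_, by omega, ?_⟩
  · zify [h3y.le, h2y.le] at hxy ⊢
    linear_combination hxy
  · simp only [pellStep, Prod.mk.injEq]
    omega

theorem exists_eq_pellStep_iterate {x y : ℕ} (hxy : x ^ 2 = 3 * y ^ 2 + 13) :
    ∃ k, (x, y) = pellStep^[k] (4, 1) ∨ (x, y) = pellStep^[k] (5, 2) := by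
  induction y using Nat.strong_induction_on generalizing x with
  | _ y ih =>
    rcases Nat.lt_or_ge y 4 with hy | hy
    · have hx : x ≤ 7 := by nlinarith
      refine ⟨0, ?_⟩
      interval_cases y <;> interval_cases x <;> simp_all
    · obtain ⟨a, b, hab, hby, hstep⟩ := exists_pellStep_eq hxy hy
      obtain ⟨k, hk⟩ := ih b hby hab
      refine ⟨k + 1, ?_⟩
      simp only [Function.iterate_succ_apply', ← hstep]
      rcases hk with hk | hk <;> simp [← hk]

theorem isPeriodicPt_pellStep_zmod :
    Function.IsPeriodicPt (pellStep (R := ZMod 765)) 18 (4, 1) ∧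
      Function.IsPeriodicPt (pellStep (R := ZMod 765)) 18 (5, 2) := by
  decide

theorem eighteen_mul_three_pow_zmod (t : ℕ) :
    (18 : ZMod 765) * 3 ^ t = 18 * 3 ^ (t % 16) := by
  have h16 : (18 : ZMod 765) * 3 ^ 16 = 18 := by decide
  have h16q (q : ℕ) : (18 : ZMod 765) * (3 ^ 16) ^ q = 18 := by
    induction q with
    | zero => simp
    | succ q ih => rw [pow_succ, ← mul_assoc, ih, h16]
  conv_lhs => rw [← Nat.div_add_mod t 16, pow_add, pow_mul, ← mul_assoc, h16q]

theorem pellStep_iterate_snd_ne_zmod :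
    ∀ k < 18, ∀ t < 16,
      (pellStep^[k] ((4, 1) : ZMod 765 × ZMod 765)).2 ≠ 18 * 3 ^ t ∧
        (pellStep^[k] ((5, 2) : ZMod 765 × ZMod 765)).2 ≠ 18 * 3 ^ t := by
  decide

theorem pellStep_iterate_snd_ne {s : ℕ × ℕ} (hs : s = (4, 1) ∨ s = (5, 2)) (k t : ℕ) :
    ((pellStep^[k] s).2 : ZMod 765) ≠ 18 * 3 ^ t := by
  have hcast : ((pellStep^[k] s).2 : ZMod 765) = (pellStep^[k] (Prod.map (↑) (↑) s)).2 :=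
    congrArg Prod.snd (((semiconj_map_pellStep (Nat.castRingHom (ZMod 765))).iterate_right k).eq s)
  obtain ⟨h41, h52⟩ := pellStep_iterate_snd_ne_zmod (k % 18) (Nat.mod_lt k (by norm_num))
    (t % 16) (Nat.mod_lt t (by norm_num))
  rw [hcast, eighteen_mul_three_pow_zmod]
  rcases hs with rfl | rfl
  · simpa [isPeriodicPt_pellStep_zmod.1.iterate_mod_apply] using h41
  · simpa [isPeriodicPt_pellStep_zmod.2.iterate_mod_apply] using h52

theorem sq_ne_three_mul_sq_add_thirteen (x t : ℕ) : x ^ 2 ≠ 3 * (18 * 3 ^ t) ^ 2 + 13 := by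
  intro hxy
  obtain ⟨k, hk | hk⟩ := exists_eq_pellStep_iterate hxy
  · exact pellStep_iterate_snd_ne (.inl rfl) k t (by simp [← hk])
  · exact pellStep_iterate_snd_ne (.inr rfl) k t (by simp [← hk])

theorem le_three_of_sq_eq (x m : ℕ) (h : x ^ 2 = 4 * 3 ^ m + 13) : m ≤ 3 := by
  obtain ⟨j, rfl | rfl⟩ := Nat.even_or_odd' m
  · have hw : x ^ 2 = (2 * 3 ^ j) ^ 2 + 13 := by rw [h, mul_pow, ← pow_mul, mul_comm j]; norm_num
    have hwx : 2 * 3 ^ j < x := lt_of_pow_lt_pow_left₀ 2 (by positivity) (by omega)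
    have : 2 * (2 * 3 ^ j) + 1 ≤ 13 := by nlinarith
    have : j < 2 := (Nat.pow_lt_pow_iff_right (by norm_num : 1 < 3)).1 (by omega : 3 ^ j < 3 ^ 2)
    omega
  · by_contra! hm
    obtain ⟨t, rfl⟩ : ∃ t, j = t + 2 := ⟨j - 2, by omega⟩
    exact sq_ne_three_mul_sq_add_thirteen x t (by rw [h]; ring)

end PellThirteen

theorem stmt_16_general (u m : ℕ) :
    u ^ 2 - 13 = 4 * 3 ^ m ↔
      (u = 5 ∧ m = 1) ∨ (u = 7 ∧ m = 2) ∨ (u = 11 ∧ m = 3) := by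
  constructor
  · intro h
    have hsq : u ^ 2 = 4 * 3 ^ m + 13 := by
      have : 0 < 3 ^ m := by positivity
      omega
    have hm := PellThirteen.le_three_of_sq_eq u m hsq
    have hu : u ≤ 11 := by
      have : 3 ^ m ≤ 3 ^ 3 := Nat.pow_le_pow_right (by norm_num) hm
      nlinarith
    interval_cases m <;> interval_cases u <;> omega
  · rintro (⟨rfl, rfl⟩ | ⟨rfl, rfl⟩ | ⟨rfl, rfl⟩) <;> norm_num

theorem stmt_16 (u m : ℕ) (hu : Odd u) (hu5 : 5 ≤ u) (hm : 0 < m) :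
    u ^ 2 - 13 = 4 * 3 ^ m ↔
      (u = 5 ∧ m = 1) ∨ (u = 7 ∧ m = 2) ∨ (u = 11 ∧ m = 3) :=
  stmt_16_general u m
end
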